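/- In the free associative algebra ℂ⟨X¹,X²⟩, the coefficient of [X¹,X²]^m in the expansion of X^m(λ₁)·X^m(λ₂) in the basis of symmetrized monomials separated by commutators is [12]^m/(m+1)!, i.e. X^m(λ₁)X^m(λ₂) = ([12]^m/(m+1)!)·C^m + (terms containing at least one symmetrized factor of positive degree), where C = [X¹,X²] and [12] is the determinant of the pair of spinors. -/

import Mathlib

/-!
Write `x = X(λ₁)`, `y = X(λ₂)`, `A = αx + βy`, so that `xA = Ax + β[12]·C`, and work modulo
the span `𝓜` of the chains with a symmetrized factor of positive degree. Every power `A^r`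
(`r > 0`) is a combination of symmetrized monomials, hence lies in `𝓜`, and `𝓜` is stable under
`m ↦ C·m` and `m ↦ m·C·A^r`. By induction on `j` (for all `n`, `α`, `β`),
`x^j A^n ≡ δ_{jn} (β[12])^j/(j+1)! · C^j`; the theorem is the case `α = 0`, `β = 1`,
`j = n = m`. In the inductive step, replacing `α` by `α + s` in the hypothesis and comparing
coefficients of `s` shows that `x^j` times the symmetrization `∑_{p+q=n+1} A^p x A^q` lies in
`𝓜`. Moving `x` to the left in each term produces `(n+2)·x^{j+1}A^{n+1}` plus commutator terms
`x^j A^a C A^b`, and by the hypothesis only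
`β[12]·x^j A^n C ≡ β[12]·δ_{jn}(β[12])^j/(j+1)!·C^{j+1}` survives.
-/

noncomputable section

open scoped BigOperators

abbrev FA := FreeAlgebra ℂ (Fin 2)

def Xg (i : Fin 2) : FA := FreeAlgebra.ι ℂ i

def Cc : FA := Xg 0 * Xg 1 - Xg 1 * Xg 0

def Xs (l : ℂ × ℂ) : FA := l.1 • Xg 0 + l.2 • Xg 1

def bra (l₁ l₂ : ℂ × ℂ) : ℂ := l₁.1 * l₂.2 - l₁.2 * l₂.1

/-- the doubly-graded symmetrized monomial `X^{k,l}(λ₁,λ₂)` -/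
def Xkl (l₁ l₂ : ℂ × ℂ) (k l : ℕ) : FA :=
  ((Nat.choose (k + l) k : ℂ))⁻¹ •
    ∑ S ∈ Finset.powersetCard k (Finset.univ : Finset (Fin (k + l))),
      (List.ofFn fun i => if i ∈ S then Xs l₁ else Xs l₂).prod

/-- the chain `X^{k₁,l₁}(λ₁,λ₂)·C·X^{k₂,l₂}(λ₁,λ₂)·C⋯C·X^{k_{a+1},l_{a+1}}(λ₁,λ₂)` -/
def chain (l₁ l₂ : ℂ × ℂ) {a : ℕ} (ks ls : Fin a → ℕ) : FA :=
  ((List.ofFn fun i => Xkl l₁ l₂ (ks i) (ls i)).intersperse Cc).prod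

/-- the basis chains containing at least one symmetrized factor of positive degree -/
def posChainSet (l₁ l₂ : ℂ × ℂ) : Set FA :=
  {x | ∃ (a : ℕ) (ks ls : Fin (a + 1) → ℕ), (∃ i, 0 < ks i + ls i) ∧ x = chain l₁ l₂ ks ls}

open Finset

theorem Finset.sum_powersetCard_succ_insert {α M : Type*} [DecidableEq α] [AddCommMonoid M]
    {a : α} {s : Finset α} (ha : a ∉ s) (k : ℕ) (f : Finset α → M) :
    ∑ t ∈ powersetCard (k + 1) (insert a s), f t =
      ∑ t ∈ powersetCard (k + 1) s, f t + ∑ t ∈ powersetCard k s, f (insert a t) := by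
  simp only [powersetCard_eq_filter, sum_filter]
  rw [sum_powerset_insert ha]
  congr 1
  refine sum_congr rfl fun t ht => ?_
  rw [card_insert_of_notMem fun h => ha (mem_powerset.1 ht h)]
  simp

theorem List.prod_ofFn_smul {K R : Type*} [CommSemiring K] [Semiring R] [Algebra K R] {n : ℕ}
    (c : Fin n → K) (w : Fin n → R) :
    (List.ofFn fun i => c i • w i).prod = (∏ i, c i) • (List.ofFn w).prod := by
  induction n with
  | zero => simp
  | succ n ih => simp [List.ofFn_succ, ih, Fin.prod_univ_succ, smul_smul, mul_comm]

section SymmetrizedSum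

variable {R : Type*} [Semiring R] (u v : R)

def symSum (n k : ℕ) : R :=
  ∑ S ∈ powersetCard k (univ : Finset (Fin n)), (List.ofFn fun i => if i ∈ S then u else v).prod

theorem symSum_zero_right (n : ℕ) : symSum u v n 0 = v ^ n := by
  simp [symSum]

theorem symSum_eq_zero_of_lt {n k : ℕ} (h : n < k) : symSum u v n k = 0 := by
  rw [symSum, powersetCard_eq_empty.2 (by simpa using h), sum_empty]

theorem symSum_succ_succ (n k : ℕ) :
    symSum u v (n + 1) (k + 1) = u * symSum u v n k + v * symSum u v n (k + 1) := by
  rw [symSum, Fin.univ_succ, cons_eq_insert, sum_powersetCard_succ_insert (by simp),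
    powersetCard_map, powersetCard_map, sum_map, sum_map, add_comm]
  simp [symSum, List.ofFn_succ, mul_sum, Fin.succ_ne_zero]

theorem symSum_succ_one (n : ℕ) :
    symSum u v (n + 1) 1 = ∑ p ∈ antidiagonal n, v ^ p.1 * u * v ^ p.2 := by
  induction n with
  | zero => simp [symSum_succ_succ, symSum_zero_right, symSum_eq_zero_of_lt]
  | succ n ih =>
    rw [symSum_succ_succ, ih, symSum_zero_right, Nat.sum_antidiagonal_succ, mul_sum]
    simp [pow_succ', mul_assoc]

theorem add_pow_eq_sum_symSum (n : ℕ) : (u + v) ^ n = ∑ k ∈ range (n + 1), symSum u v n k := by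
  induction n with
  | zero => simp [symSum_zero_right]
  | succ n ih =>
    rw [sum_range_succ', symSum_zero_right, pow_succ', ih, add_mul, mul_sum, mul_sum]
    simp only [symSum_succ_succ, sum_add_distrib]
    rw [sum_range_succ (fun k => v * symSum u v n (k + 1)), symSum_eq_zero_of_lt u v (by omega),
      mul_zero, add_zero, sum_range_succ' (fun k => v * symSum u v n k), symSum_zero_right,
      ← pow_succ']
    abel

variable {K : Type*} [CommSemiring K] [Algebra K R]

theorem symSum_smul_smul (a b : K) (n k : ℕ) :
    symSum (a • u) (b • v) n k = (a ^ k * b ^ (n - k)) • symSum u v n k := by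
  rw [symSum, symSum, smul_sum]
  refine sum_congr rfl fun S hS => ?_
  have hcard : #S = k := (mem_powersetCard.1 hS).2
  have hfun : (fun i => if i ∈ S then a • u else b • v) =
      fun i => (if i ∈ S then a else b) • (if i ∈ S then u else v) := by
    funext i; split_ifs <;> rfl
  rw [hfun, List.prod_ofFn_smul]
  congr 1
  rw [prod_ite, filter_mem_eq_inter, ← sdiff_eq_filter]
  simp [card_univ_sdiff, hcard]

theorem smul_add_smul_pow (a b : K) (n : ℕ) :
    (a • u + b • v) ^ n = ∑ k ∈ range (n + 1), (a ^ k * b ^ (n - k)) • symSum u v n k := by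
  rw [add_pow_eq_sum_symSum]
  exact sum_congr rfl fun k _ => symSum_smul_smul u v a b n k

end SymmetrizedSum

theorem eq_zero_of_forall_sum_pow_smul_eq {K V : Type*} [Field K] [Infinite K] [AddCommGroup V]
    [Module K V] {N : ℕ} {v : ℕ → V} {c : V} (h : ∀ s : K, ∑ p ∈ range N, s ^ p • v p = c)
    {p : ℕ} (hp0 : p ≠ 0) (hpN : p < N) : v p = 0 := by
  refine (Module.forall_dual_apply_eq_zero_iff K (v p)).1 fun φ => ?_
  set q : Polynomial K := ∑ i ∈ range N, Polynomial.monomial i (φ (v i)) - Polynomial.C (φ c)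
  have hq : q = 0 := Polynomial.zero_of_eval_zero _ fun s => by
    simp [q, Polynomial.eval_finsetSum, ← h s, mul_comm]
  simpa [q, Polynomial.finsetSum_coeff, Polynomial.coeff_monomial, Polynomial.coeff_C, hp0, hpN]
    using congrArg (Polynomial.coeff · p) hq

theorem mul_pow_succ_eq_of_mul_eq {R : Type*} [Semiring R] {x A w : R} (h : x * A = A * x + w)
    (n : ℕ) : x * A ^ (n + 1) = A ^ (n + 1) * x + ∑ p ∈ antidiagonal n, A ^ p.1 * w * A ^ p.2 := by
  induction n with
  | zero => simp [h]
  | succ n ih =>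
    rw [pow_succ, ← mul_assoc, ih, add_mul, mul_assoc, h, Nat.sum_antidiagonal_succ', sum_mul]
    simp only [mul_add, ← mul_assoc, ← pow_succ, pow_zero, mul_one, add_assoc]
    simp only [mul_assoc, ← pow_succ]

theorem Finset.Nat.sum_antidiagonal_ite_snd_eq_zero {M : Type*} [AddCommMonoid M] (n : ℕ)
    (g : ℕ → M) : ∑ p ∈ antidiagonal n, (if p.2 = 0 then g p.1 else 0) = g n := by
  rw [sum_eq_single (n, 0) (fun p hp hne => if_neg ?_) (by simp)]
  · simp
  · rintro h0
    exact hne (Prod.ext (by have := mem_antidiagonal.1 hp; omega) h0)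

theorem List.prod_intersperse_append_singleton {M : Type*} [Monoid M] (c b : M) {L : List M}
    (hL : L ≠ []) : ((L ++ [b]).intersperse c).prod = (L.intersperse c).prod * c * b := by
  induction L with
  | nil => exact absurd rfl hL
  | cons a L ih =>
    cases L with
    | nil => simp [mul_assoc]
    | cons d L =>
      simp only [List.cons_append] at ih ⊢
      simp [ih (List.cons_ne_nil d L), mul_assoc]

section PositiveChains

variable (l₁ l₂ : ℂ × ℂ)

local notation "𝓜" => Submodule.span ℂ (posChainSet l₁ l₂)

theorem chain_snoc {a : ℕ} (ks ls : Fin (a + 1) → ℕ) (k l : ℕ) :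
    chain l₁ l₂ (Fin.snoc ks k) (Fin.snoc ls l) = chain l₁ l₂ ks ls * Cc * Xkl l₁ l₂ k l := by
  simp only [chain, List.ofFn_succ', Fin.snoc_castSucc, Fin.snoc_last, List.concat_eq_append]
  rw [List.prod_intersperse_append_singleton _ _ (by simp)]

theorem chain_cons_zero {a : ℕ} (ks ls : Fin (a + 1) → ℕ) :
    chain l₁ l₂ (Fin.cons 0 ks) (Fin.cons 0 ls) = Cc * chain l₁ l₂ ks ls := by
  have h00 : Xkl l₁ l₂ 0 0 = 1 := by simp [Xkl]
  simp only [chain, List.ofFn_succ, Fin.cons_zero, Fin.cons_succ, h00, List.intersperse_cons_cons,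
    List.prod_cons, one_mul]

theorem Xkl_mem {k l : ℕ} (h : 0 < k + l) : Xkl l₁ l₂ k l ∈ 𝓜 :=
  Submodule.subset_span ⟨0, fun _ => k, fun _ => l, ⟨0, h⟩, by simp [chain]⟩

theorem mul_Cc_mul_Xkl_mem {m : FA} (hm : m ∈ 𝓜) (k l : ℕ) : m * Cc * Xkl l₁ l₂ k l ∈ 𝓜 := by
  have hle : 𝓜 ≤ Submodule.comap (LinearMap.mulRight ℂ (Cc * Xkl l₁ l₂ k l)) 𝓜 := by
    refine Submodule.span_le.2 fun z ⟨a, ks, ls, ⟨i, hi⟩, hz⟩ => ?_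
    rw [SetLike.mem_coe, Submodule.mem_comap, LinearMap.mulRight_apply, ← mul_assoc, hz,
      ← chain_snoc]
    exact Submodule.subset_span ⟨a + 1, _, _, ⟨i.castSucc, by simpa using hi⟩, rfl⟩
  simpa [mul_assoc] using hle hm

theorem Cc_mul_mem {m : FA} (hm : m ∈ 𝓜) : Cc * m ∈ 𝓜 := by
  have hle : 𝓜 ≤ Submodule.comap (LinearMap.mulLeft ℂ Cc) 𝓜 := by
    refine Submodule.span_le.2 fun z ⟨a, ks, ls, ⟨i, hi⟩, hz⟩ => ?_
    rw [SetLike.mem_coe, Submodule.mem_comap, LinearMap.mulLeft_apply, hz, ← chain_cons_zero]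
    exact Submodule.subset_span ⟨a + 1, _, _, ⟨i.succ, by simpa using hi⟩, rfl⟩
  exact hle hm

theorem Cc_pow_mul_mem {m : FA} (hm : m ∈ 𝓜) (t : ℕ) : Cc ^ t * m ∈ 𝓜 := by
  induction t with
  | zero => simpa using hm
  | succ t ih => simpa [pow_succ', mul_assoc] using Cc_mul_mem l₁ l₂ ih

theorem symSum_Xs_eq_choose_smul_Xkl {n k : ℕ} (hk : k ≤ n) :
    symSum (Xs l₁) (Xs l₂) n k = (n.choose k : ℂ) • Xkl l₁ l₂ k (n - k) := by
  obtain ⟨l, rfl⟩ := Nat.exists_eq_add_of_le hk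
  rw [Nat.add_sub_cancel_left, Xkl, smul_smul,
    mul_inv_cancel₀ (Nat.cast_ne_zero.2 (Nat.choose_pos hk).ne'), one_smul, symSum]

theorem smul_add_smul_pow_eq_sum_Xkl (α β : ℂ) (r : ℕ) :
    (α • Xs l₁ + β • Xs l₂) ^ r =
      ∑ k ∈ range (r + 1), (α ^ k * β ^ (r - k) * r.choose k) • Xkl l₁ l₂ k (r - k) := by
  rw [smul_add_smul_pow]
  refine sum_congr rfl fun k hk => ?_
  rw [symSum_Xs_eq_choose_smul_Xkl l₁ l₂ (Nat.lt_succ_iff.1 (mem_range.1 hk)), smul_smul]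

theorem smul_add_smul_pow_mem (α β : ℂ) {r : ℕ} (hr : 0 < r) : (α • Xs l₁ + β • Xs l₂) ^ r ∈ 𝓜 := by
  rw [smul_add_smul_pow_eq_sum_Xkl]
  exact sum_mem fun k hk => Submodule.smul_mem _ _ (Xkl_mem l₁ l₂ (by grind))

theorem mul_Cc_mul_smul_add_smul_pow_mem {m : FA} (hm : m ∈ 𝓜) (α β : ℂ) (r : ℕ) :
    m * Cc * (α • Xs l₁ + β • Xs l₂) ^ r ∈ 𝓜 := by
  rw [smul_add_smul_pow_eq_sum_Xkl, mul_sum]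
  refine sum_mem fun k _ => ?_
  rw [mul_smul_comm]
  exact Submodule.smul_mem _ _ (mul_Cc_mul_Xkl_mem l₁ l₂ hm _ _)

end PositiveChains

def cCoeff (j n : ℕ) (b : ℂ) : ℂ := if j = n then b ^ j / (j + 1).factorial else 0

theorem cCoeff_succ_succ (j n : ℕ) (b : ℂ) :
    ((n + 2 : ℕ) : ℂ) * cCoeff (j + 1) (n + 1) b = b * cCoeff j n b := by
  unfold cCoeff
  by_cases hjn : j = n
  · subst hjn
    have h2 : ((j + 2 : ℕ) : ℂ) ≠ 0 := Nat.cast_ne_zero.2 (by omega)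
    rw [if_pos rfl, if_pos rfl, Nat.factorial_succ (j + 1), Nat.cast_mul, ← div_div, pow_succ']
    field_simp
  · rw [if_neg (by omega), if_neg hjn, mul_zero, mul_zero]

section Reduction

variable (l₁ l₂ : ℂ × ℂ)

local notation "𝓜" => Submodule.span ℂ (posChainSet l₁ l₂)

theorem Xs_mul_smul_add_smul (α β : ℂ) :
    Xs l₁ * (α • Xs l₁ + β • Xs l₂) = (α • Xs l₁ + β • Xs l₂) * Xs l₁ + (β * bra l₁ l₂) • Cc := by
  simp only [Xs, Cc, bra, add_mul, mul_add, smul_mul_assoc, mul_smul_comm, smul_sub]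
  module

def PowMulPowReduction (j : ℕ) : Prop :=
  ∀ (n : ℕ) (α β : ℂ), Xs l₁ ^ j * (α • Xs l₁ + β • Xs l₂) ^ n ≡
    cCoeff j n (β * bra l₁ l₂) • Cc ^ j [SMOD 𝓜]

theorem powMulPowReduction_zero : PowMulPowReduction l₁ l₂ 0 := by
  rintro (_ | n) α β
  · simp [cCoeff]
  · rw [cCoeff, if_neg n.succ_ne_zero.symm, zero_smul, pow_zero, one_mul, SModEq.zero]
    exact smul_add_smul_pow_mem l₁ l₂ α β n.succ_pos

variable {l₁ l₂} {j : ℕ}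

theorem PowMulPowReduction.mul_Cc_mul_pow (h : PowMulPowReduction l₁ l₂ j) (α β : ℂ) (a b : ℕ) :
    Xs l₁ ^ j * (α • Xs l₁ + β • Xs l₂) ^ a * Cc * (α • Xs l₁ + β • Xs l₂) ^ b ≡
      (if b = 0 then cCoeff j a (β * bra l₁ l₂) else 0) • Cc ^ (j + 1) [SMOD 𝓜] := by
  have hfirst := mul_Cc_mul_smul_add_smul_pow_mem l₁ l₂ (SModEq.sub_mem.1 (h a α β)) α β b
  rw [sub_mul, sub_mul, ← SModEq.sub_mem, smul_mul_assoc, smul_mul_assoc, ← pow_succ] at hfirst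
  refine hfirst.trans ?_
  rcases b with _ | b
  · simp
  · rw [if_neg b.succ_ne_zero, zero_smul, SModEq.zero]
    exact Submodule.smul_mem _ _
      (Cc_pow_mul_mem l₁ l₂ (smul_add_smul_pow_mem l₁ l₂ α β b.succ_pos) _)

theorem PowMulPowReduction.mul_pow_succ_mul_mul_pow (h : PowMulPowReduction l₁ l₂ j)
    (α β : ℂ) (r q : ℕ) :
    Xs l₁ ^ j * ((α • Xs l₁ + β • Xs l₂) ^ (r + 1) * Xs l₁ * (α • Xs l₁ + β • Xs l₂) ^ q) ≡
      Xs l₁ ^ (j + 1) * (α • Xs l₁ + β • Xs l₂) ^ (r + 1 + q) -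
        (if q = 0 then β * bra l₁ l₂ * cCoeff j r (β * bra l₁ l₂) else 0) • Cc ^ (j + 1)
      [SMOD 𝓜] := by
  have hcomm := mul_pow_succ_eq_of_mul_eq (Xs_mul_smul_add_smul l₁ l₂ α β) r
  set x := Xs l₁
  set A := α • x + β • Xs l₂
  set b := β * bra l₁ l₂
  have hexp : x ^ j * (A ^ (r + 1) * x * A ^ q) = x ^ (j + 1) * A ^ (r + 1 + q) -
      b • ∑ p ∈ antidiagonal r, x ^ j * A ^ p.1 * Cc * A ^ (p.2 + q) := by
    rw [eq_sub_of_add_eq hcomm.symm]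
    simp only [sub_mul, mul_sub, sum_mul, mul_sum, smul_sum, pow_add, pow_succ, mul_assoc,
      smul_mul_assoc, mul_smul_comm]
  rw [hexp]
  refine (SModEq.rfl.sub
    ((SModEq.sum fun p _ => h.mul_Cc_mul_pow α β p.1 (p.2 + q)).smul b)).trans ?_
  rw [← sum_smul, smul_smul]
  rcases q with _ | q
  · simp only [Nat.add_zero, if_true]
    rw [Nat.sum_antidiagonal_ite_snd_eq_zero r fun a => cCoeff j a b]
  · simp

theorem PowMulPowReduction.pow_mul_sum_smodEq_zero (h : PowMulPowReduction l₁ l₂ j) (α β : ℂ)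
    (n : ℕ) :
    Xs l₁ ^ j * ∑ p ∈ antidiagonal n,
        (α • Xs l₁ + β • Xs l₂) ^ p.1 * Xs l₁ * (α • Xs l₁ + β • Xs l₂) ^ p.2 ≡ 0 [SMOD 𝓜] := by
  set x := Xs l₁
  set A := α • x + β • Xs l₂
  have hpoly : ∀ s : ℂ, ∑ p ∈ range (n + 2),
      s ^ p • (Submodule.Quotient.mk (x ^ j * symSum x A (n + 1) p) : FA ⧸ 𝓜) =
        Submodule.Quotient.mk (cCoeff j (n + 1) (β * bra l₁ l₂) • Cc ^ j) := by
    intro s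
    have hA : (α + s) • x + β • Xs l₂ = s • x + (1 : ℂ) • A := by
      simp only [A, add_smul, one_smul]
      abel
    have hs := h (n + 1) (α + s) β
    rw [hA, smul_add_smul_pow, mul_sum, SModEq.def, ← Submodule.mkQ_apply, map_sum] at hs
    simpa [mul_smul_comm] using hs
  have h1 := eq_zero_of_forall_sum_pow_smul_eq hpoly one_ne_zero (by omega)
  rwa [symSum_succ_one, ← Submodule.Quotient.mk_zero] at h1

theorem PowMulPowReduction.smul_pow_succ_mul_pow_succ (h : PowMulPowReduction l₁ l₂ j)
    (α β : ℂ) (n : ℕ) :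
    ((n + 2 : ℕ) : ℂ) • (Xs l₁ ^ (j + 1) * (α • Xs l₁ + β • Xs l₂) ^ (n + 1)) ≡
      (β * bra l₁ l₂ * cCoeff j n (β * bra l₁ l₂)) • Cc ^ (j + 1) [SMOD 𝓜] := by
  set b := β * bra l₁ l₂
  have hsum := h.pow_mul_sum_smodEq_zero α β (n + 1)
  rw [Nat.sum_antidiagonal_succ, mul_add, mul_sum] at hsum
  dsimp only at hsum
  rw [pow_zero, one_mul, ← mul_assoc, ← pow_succ] at hsum
  have hterms := SModEq.sum fun p (_ : p ∈ antidiagonal n) =>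
    h.mul_pow_succ_mul_mul_pow α β p.1 p.2
  have hdeg : ∀ p ∈ antidiagonal n, p.1 + 1 + p.2 = n + 1 := fun p hp => by
    have := mem_antidiagonal.1 hp
    omega
  conv_rhs at hterms =>
    rw [sum_sub_distrib, ← sum_smul,
      Nat.sum_antidiagonal_ite_snd_eq_zero n fun a => b * cCoeff j a b,
      sum_congr rfl fun p hp => by rw [hdeg p hp], sum_const, Nat.card_antidiagonal]
  rw [← sub_smodEq_zero, SModEq.zero]
  convert SModEq.zero.1 ((SModEq.rfl.add hterms).symm.trans hsum) using 1
  push_cast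
  module

theorem PowMulPowReduction.succ (h : PowMulPowReduction l₁ l₂ j) :
    PowMulPowReduction l₁ l₂ (j + 1) := by
  rintro (_ | n) α β
  · rw [cCoeff, if_neg j.succ_ne_zero, zero_smul, pow_zero, mul_one, SModEq.zero]
    simpa using smul_add_smul_pow_mem l₁ l₂ 1 0 j.succ_pos
  have hn : ((n + 2 : ℕ) : ℂ) ≠ 0 := Nat.cast_ne_zero.2 (n + 1).succ_ne_zero
  have key := (h.smul_pow_succ_mul_pow_succ α β n).smul ((n + 2 : ℕ) : ℂ)⁻¹
  rwa [smul_smul, inv_mul_cancel₀ hn, one_smul, ← cCoeff_succ_succ, smul_smul, ← mul_assoc,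
    inv_mul_cancel₀ hn, one_mul] at key

end Reduction

theorem powMulPowReduction (l₁ l₂ : ℂ × ℂ) (j : ℕ) : PowMulPowReduction l₁ l₂ j := by
  induction j with
  | zero => exact powMulPowReduction_zero l₁ l₂
  | succ j ih => exact ih.succ

theorem statement6 (m : ℕ) (l₁ l₂ : ℂ × ℂ) :
    Xs l₁ ^ m * Xs l₂ ^ m -
        (bra l₁ l₂ ^ m / ((m + 1).factorial : ℂ)) • Cc ^ m ∈
      Submodule.span ℂ (posChainSet l₁ l₂) := by
  have h := powMulPowReduction l₁ l₂ m m 0 1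
  rwa [zero_smul, zero_add, one_smul, one_mul, cCoeff, if_pos rfl, SModEq.sub_mem] at h

end
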